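/- arXiv:2104.06531 — 3 statements merged into one kernel-verified Lean document; each statement's English description precedes it below -/
import Mathlib

section
/- If real numbers δ_{k+1},...,δ_n satisfy |δ_j| ≤ u with 0 ≤ u < 1, then |Π_{j=k+1}^n (1+δ_j) - 1| ≤ exp((|Σ_{j=k+1}^n δ_j| + (n-k)u²)/(1-u)) - 1. -/
/-! Since every factor is positive, `∏ (1 + δ j) = exp S` with `S = ∑ log (1 + δ j)`, and
`|exp S - 1| ≤ exp |S| - 1`. Each `log (1 + δ j)` differs from `δ j` by at most `u² / (1 - u)`
(the tail of the logarithm series), so `|S| ≤ |∑ δ j| + m u² / (1 - u)` with `m` the number of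
factors, which is at most `(|∑ δ j| + m u²) / (1 - u)`. -/

open Finset Real

theorem Real.abs_exp_sub_one_le_exp_abs_sub_one (x : ℝ) : |exp x - 1| ≤ exp |x| - 1 := by
  have h_upper : exp x ≤ exp |x| := exp_le_exp.mpr (le_abs_self x)
  have h_lower : 2 ≤ exp x + exp |x| := by
    linarith [add_one_le_exp x, add_one_le_exp |x|, neg_abs_le x]
  exact abs_le.mpr ⟨by linarith, by linarith⟩

theorem Real.abs_log_one_add_sub_self_le {x u : ℝ} (hx : |x| ≤ u) (hu : u < 1) :
    |log (1 + x) - x| ≤ u ^ 2 / (1 - u) := by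
  have hx1 : |-x| < 1 := by rw [abs_neg]; linarith
  have h := abs_log_sub_add_sum_range_le hx1 1
  simp only [sum_range_one, pow_one, Nat.cast_zero, zero_add, div_one, abs_neg,
    sub_neg_eq_add] at h
  have hx1' : 0 < 1 - |x| := by linarith
  calc |log (1 + x) - x| = |-x + log (1 + x)| := by ring_nf
    _ ≤ |x| ^ 2 / (1 - |x|) := h
    _ ≤ u ^ 2 / (1 - u) := by gcongr

section

variable {ι : Type*} {s : Finset ι} {δ : ι → ℝ} {u : ℝ}

theorem prod_one_add_eq_exp_sum_log (hδ : ∀ j ∈ s, 0 < 1 + δ j) :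
    ∏ j ∈ s, (1 + δ j) = exp (∑ j ∈ s, log (1 + δ j)) := by
  rw [exp_sum]
  exact prod_congr rfl fun j hj => (exp_log (hδ j hj)).symm

theorem abs_sum_log_one_add_sub_sum_le (hδ : ∀ j ∈ s, |δ j| ≤ u) (hu1 : u < 1) :
    |∑ j ∈ s, log (1 + δ j) - ∑ j ∈ s, δ j| ≤ #s * (u ^ 2 / (1 - u)) := by
  rw [← sum_sub_distrib, ← nsmul_eq_mul, ← sum_const]
  exact (abs_sum_le_sum_abs _ _).trans
    (sum_le_sum fun j hj => abs_log_one_add_sub_self_le (hδ j hj) hu1)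

theorem abs_sum_log_one_add_le (hδ : ∀ j ∈ s, |δ j| ≤ u) (hu0 : 0 ≤ u) (hu1 : u < 1) :
    |∑ j ∈ s, log (1 + δ j)| ≤ (|∑ j ∈ s, δ j| + #s * u ^ 2) / (1 - u) := by
  set S := ∑ j ∈ s, log (1 + δ j)
  set T := ∑ j ∈ s, δ j
  have hu : 0 < 1 - u := by linarith
  have hT : |T| ≤ |T| / (1 - u) := le_div_self (abs_nonneg T) hu (by linarith)
  calc |S| ≤ |T| + |S - T| := by linarith [abs_sub_abs_le_abs_sub S T]
    _ ≤ |T| + #s * (u ^ 2 / (1 - u)) := by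
        gcongr; exact abs_sum_log_one_add_sub_sum_le hδ hu1
    _ ≤ |T| / (1 - u) + #s * (u ^ 2 / (1 - u)) := by gcongr
    _ = (|T| + #s * u ^ 2) / (1 - u) := by ring

theorem abs_prod_one_add_sub_one_le (hδ : ∀ j ∈ s, |δ j| ≤ u) (hu0 : 0 ≤ u) (hu1 : u < 1) :
    |∏ j ∈ s, (1 + δ j) - 1| ≤ exp ((|∑ j ∈ s, δ j| + #s * u ^ 2) / (1 - u)) - 1 := by
  have hpos : ∀ j ∈ s, 0 < 1 + δ j := fun j hj => by
    linarith [neg_abs_le (δ j), hδ j hj]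
  rw [prod_one_add_eq_exp_sum_log hpos]
  calc _ ≤ exp |∑ j ∈ s, log (1 + δ j)| - 1 := abs_exp_sub_one_le_exp_abs_sub_one _
    _ ≤ _ := by gcongr; exact abs_sum_log_one_add_le hδ hu0 hu1

end

theorem product_perturbation_bound
    (n k : ℕ) (hk : k ≤ n) (u : ℝ) (hu0 : 0 ≤ u) (hu1 : u < 1)
    (δ : ℕ → ℝ) (hδ : ∀ j ∈ Finset.Icc (k + 1) n, |δ j| ≤ u) :
    |(∏ j ∈ Finset.Icc (k + 1) n, (1 + δ j)) - 1| ≤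
      Real.exp ((|∑ j ∈ Finset.Icc (k + 1) n, δ j| + ((n : ℝ) - k) * u ^ 2) / (1 - u)) - 1 := by
  have hcard : (#(Icc (k + 1) n) : ℝ) = (n : ℝ) - k := by
    rw [Nat.card_Icc, Nat.add_sub_add_right, Nat.cast_sub hk]
  simpa only [hcard] using abs_prod_one_add_sub_one_le hδ hu0 hu1
end

section
/- Define S_k^{(j)} for k ≥ 1, j ≥ 1 by S_1^{(j)} = 0, S_k^{(1)} = S_{k-1}^{(1)} + δ_k s_k, and S_k^{(j)} = S_{k-1}^{(j)} + δ_k S_{k-1}^{(j-1)} for j > 1. Then the forward error from recursive summation satisfies E_n = Σ_{j=1}^{n-1} S_n^{(j)}. -/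
/-!
Write `Tₖ(m) = ∑_{i<m} S_k^{(i+1)}`. Summing the recurrences for `S` over the orders gives
`Tₖ(m+1) = Tₖ₋₁(m+1) + δₖ (sₖ + Tₖ₋₁(m))`. By induction `Tₖ₋₁(k-2) = Eₖ₋₁`, and since
`S_k^{(j)} = 0` for `j ≥ k` also `Tₖ₋₁(k-1) = Eₖ₋₁`, so the identity for `Tₖ(k-1)` is exactly the
recursion `Eₖ = Eₖ₋₁ (1 + δₖ) + δₖ sₖ`.
-/

open Finset

section ErrorTerms

variable {δ s : ℕ → ℝ} {S : ℕ → ℕ → ℝ}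

theorem error_term_eq_zero_of_le
    (hS1 : ∀ j, 1 ≤ j → S 1 j = 0)
    (hShigh : ∀ k, 2 ≤ k → ∀ j, 2 ≤ j → S k j = S (k - 1) j + δ k * S (k - 1) (j - 1))
    {k : ℕ} (hk : 1 ≤ k) : ∀ j, k ≤ j → S k j = 0 := by
  induction k, hk using Nat.le_induction with
  | base => exact hS1
  | succ k hk ih =>
    intro j hkj
    rw [hShigh (k + 1) (by omega) j (by omega), Nat.add_sub_cancel, ih j (by omega),
      ih (j - 1) (by omega), mul_zero, add_zero]

theorem sum_range_error_terms_succ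
    (hSfirst : ∀ k, 2 ≤ k → S k 1 = S (k - 1) 1 + δ k * s k)
    (hShigh : ∀ k, 2 ≤ k → ∀ j, 2 ≤ j → S k j = S (k - 1) j + δ k * S (k - 1) (j - 1))
    {k : ℕ} (hk : 2 ≤ k) (m : ℕ) :
    ∑ i ∈ range (m + 1), S k (i + 1) =
      ∑ i ∈ range (m + 1), S (k - 1) (i + 1) + δ k * (s k + ∑ i ∈ range m, S (k - 1) (i + 1)) := by
  have hhigh : ∀ i, S k (i + 2) = S (k - 1) (i + 2) + δ k * S (k - 1) (i + 1) :=
    fun i ↦ hShigh k hk (i + 2) (by omega)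
  simp only [sum_range_succ' _ m, zero_add, hSfirst k hk, hhigh, sum_add_distrib, ← mul_sum]
  ring

end ErrorTerms

theorem error_order_decomposition
    (n : ℕ) (hn : 1 ≤ n)
    (δ s : ℕ → ℝ) (E : ℕ → ℝ) (S : ℕ → ℕ → ℝ)
    (hE1 : E 1 = 0)
    (hE : ∀ k, 2 ≤ k → E k = E (k - 1) * (1 + δ k) + δ k * s k)
    (hS1 : ∀ j, 1 ≤ j → S 1 j = 0)
    (hSfirst : ∀ k, 2 ≤ k → S k 1 = S (k - 1) 1 + δ k * s k)
    (hShigh : ∀ k, 2 ≤ k → ∀ j, 2 ≤ j → S k j = S (k - 1) j + δ k * S (k - 1) (j - 1)) :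
    E n = ∑ j ∈ Finset.Icc 1 (n - 1), S n j := by
  obtain ⟨m, rfl⟩ := Nat.exists_eq_add_of_le' hn
  suffices h : ∀ m, E (m + 1) = ∑ i ∈ range m, S (m + 1) (i + 1) by
    rw [h, Nat.add_sub_cancel, ← Ico_add_one_right_eq_Icc, sum_Ico_eq_sum_range,
      Nat.add_sub_cancel]
    simp only [add_comm 1]
  intro m
  induction m with
  | zero => simpa using hE1
  | succ m ih =>
    have hdiag : S (m + 1) (m + 1) = 0 := error_term_eq_zero_of_le hS1 hShigh (by omega) _ le_rfl
    rw [hE (m + 1 + 1) (by omega), sum_range_error_terms_succ hSfirst hShigh (by omega),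
      sum_range_succ, Nat.add_sub_cancel, ih, hdiag]
    ring
end

section
/- Let δ_2,...,δ_n be independent mean-zero random variables with |δ_k| ≤ u, and let s_2,...,s_n be real constants. Define Z_k = Σ_{j=n-k+1}^n s_j δ_j Π_{ℓ=j+1}^n (1+δ_ℓ) for k = 1,...,n-1 (sums in reverse index order). Then Z_1,...,Z_{n-1} is a martingale with respect to the reversed sequence δ_n, δ_{n-1},...,δ_2. -/
/-!
With `j = n - k`, the increment `Z (k + 1) - Z k` is `s j * ∏_{ℓ > j} (1 + δ ℓ) * δ j`. The weight
`s j * ∏_{ℓ > j} (1 + δ ℓ)` is a function of `δ (j + 1), …, δ n = ε k, …, ε 1`, hence measurable for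
the `k`-th σ-algebra of the reversed filtration, while `δ j` is independent of that σ-algebra and
has mean zero. Pulling out the weight, the conditional expectation of the increment vanishes.
Boundedness of the `δ`'s puts every term in `L^∞`, which gives the integrability needed throughout.
-/

open MeasureTheory ProbabilityTheory Finset
open scoped ENNReal

theorem condExp_mul_add_ae_eq_of_indep {Ω : Type*} {m m₀ : MeasurableSpace Ω} {μ : Measure Ω}
    [IsFiniteMeasure μ] {g X Y : Ω → ℝ} (hm : m ≤ m₀) (hX : Measurable X)
    (hindep : Indep (MeasurableSpace.comap X inferInstance) m μ) (hX_int : Integrable X μ)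
    (hX_mean : μ[X] = 0) (hg : StronglyMeasurable[m] g) (hgX : Integrable (g * X) μ)
    (hY : StronglyMeasurable[m] Y) (hY_int : Integrable Y μ) :
    μ[g * X + Y | m] =ᵐ[μ] Y := by
  have hX_cond : μ[X | m] =ᵐ[μ] fun _ => 0 := by
    simpa [hX_mean] using
      condExp_indep_eq hX.comap_le hm (comap_measurable X).stronglyMeasurable hindep
  calc μ[g * X + Y | m]
      =ᵐ[μ] μ[g * X | m] + μ[Y | m] := condExp_add hgX hY_int m
    _ =ᵐ[μ] g * μ[X | m] + Y := by
      rw [condExp_of_stronglyMeasurable hm hY hY_int]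
      exact (condExp_mul_of_stronglyMeasurable_left hg hgX hX_int).add .rfl
    _ =ᵐ[μ] Y := by
      filter_upwards [hX_cond] with ω hω
      simp [hω]

theorem ProbabilityTheory.iIndepFun.indep_comap_of_le_iSup_compl {Ω ι : Type*}
    {m₀ : MeasurableSpace Ω} {μ : Measure Ω} {δ : ι → Ω → ℝ} (hδ : ∀ i, Measurable (δ i))
    (hindep : iIndepFun δ μ) {j : ι} {m : MeasurableSpace Ω}
    (hm : m ≤ ⨆ i ∈ ({j}ᶜ : Set ι), MeasurableSpace.comap (δ i) inferInstance) :
    Indep (MeasurableSpace.comap (δ j) inferInstance) m μ := by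
  have h := indep_iSup_of_disjoint (fun i => (hδ i).comap_le) hindep
    (disjoint_compl_right (a := ({j} : Set ι)))
  simp only [Set.mem_singleton_iff, iSup_iSup_eq_left] at h
  exact indep_of_indep_of_le_right h hm

theorem MeasureTheory.Filtration.natural_le_iSup_comap {Ω ι : Type*} [MeasurableSpace Ω]
    {ε : ℕ → Ω → ℝ} {δ : ι → Ω → ℝ} (hε : ∀ i, StronglyMeasurable (ε i)) {k : ℕ} {S : Set ι}
    (h : ∀ i ≤ k, ∃ j ∈ S, ε i = δ j) :
    Filtration.natural ε hε k ≤ ⨆ j ∈ S, MeasurableSpace.comap (δ j) inferInstance := by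
  refine iSup₂_le fun i hi => ?_
  obtain ⟨j, hj, hεδ⟩ := h i hi
  rw [hεδ]
  exact le_iSup₂ (f := fun j (_ : j ∈ S) => MeasurableSpace.comap (δ j) inferInstance) j hj

theorem MeasureTheory.MemLp.prod_one_add_top {Ω ι : Type*} {m₀ : MeasurableSpace Ω}
    {μ : Measure Ω} {f : ι → Ω → ℝ} {t : Finset ι} (hf : ∀ i ∈ t, MemLp (f i) ∞ μ) :
    MemLp (fun ω => ∏ i ∈ t, (1 + f i ω)) ∞ μ := by
  have h := MemLp.prod' (p := fun _ => ∞) (f := fun i ω => 1 + f i ω)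
    fun i hi => (memLp_top_const (1 : ℝ)).add (hf i hi)
  simpa only [ENNReal.inv_top, sum_const_zero, ENNReal.inv_zero] using h

namespace ErrorProcess

variable {Ω : Type*} (s : ℕ → ℝ) (δ : ℕ → Ω → ℝ) (n : ℕ)

def weight (j : ℕ) (ω : Ω) : ℝ := s j * ∏ ℓ ∈ Icc (j + 1) n, (1 + δ ℓ ω)

/-- The paper's `Z_k` is `tailSum s δ n (n - k + 1)`. -/
def tailSum (a : ℕ) : Ω → ℝ := ∑ j ∈ Icc a n, weight s δ n j * δ j

theorem tailSum_apply (a : ℕ) (ω : Ω) :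
    tailSum s δ n a ω = ∑ j ∈ Icc a n, s j * δ j ω * ∏ ℓ ∈ Icc (j + 1) n, (1 + δ ℓ ω) := by
  simp only [tailSum, weight, Finset.sum_apply, Pi.mul_apply, mul_right_comm]

theorem tailSum_eq_add {a : ℕ} (ha : a ≤ n) :
    tailSum s δ n a = weight s δ n a * δ a + tailSum s δ n (a + 1) := by
  rw [tailSum, ← add_sum_Ioc_eq_sum_Icc ha, ← Icc_add_one_left_eq_Ioc, tailSum]

variable {s δ n} {m : MeasurableSpace Ω}

theorem stronglyMeasurable_weight {j : ℕ}
    (hδ : ∀ ℓ ∈ Icc (j + 1) n, StronglyMeasurable (δ ℓ)) :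
    StronglyMeasurable (weight s δ n j) :=
  stronglyMeasurable_const.mul <| Finset.stronglyMeasurable_fun_prod _ fun ℓ hℓ =>
    stronglyMeasurable_const.add (hδ ℓ hℓ)

theorem stronglyMeasurable_tailSum {a : ℕ} (hδ : ∀ j ∈ Icc a n, StronglyMeasurable (δ j)) :
    StronglyMeasurable (tailSum s δ n a) := by
  refine Finset.stronglyMeasurable_sum _ fun j hj => ?_
  refine (stronglyMeasurable_weight fun ℓ hℓ => hδ ℓ ?_).mul (hδ j hj)
  simp only [mem_Icc] at hj hℓ ⊢
  omega

variable {μ : Measure Ω}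

theorem memLp_top_weight_mul {j : ℕ} (hj : j ≤ n) (hδ : ∀ ℓ ∈ Icc j n, MemLp (δ ℓ) ∞ μ) :
    MemLp (weight s δ n j * δ j) ∞ μ := by
  refine (hδ j (by simp [hj])).mul ((MemLp.prod_one_add_top fun ℓ hℓ => hδ ℓ ?_).const_mul (s j))
  simp only [mem_Icc] at hℓ ⊢
  omega

theorem memLp_top_tailSum {a : ℕ} (hδ : ∀ j ∈ Icc a n, MemLp (δ j) ∞ μ) :
    MemLp (tailSum s δ n a) ∞ μ := by
  refine memLp_finsetSum' _ fun j hj => ?_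
  simp only [mem_Icc] at hj
  exact memLp_top_weight_mul hj.2 fun ℓ hℓ => hδ ℓ (by simp only [mem_Icc] at hℓ ⊢; omega)

end ErrorProcess

open ErrorProcess in
theorem reversed_error_process_is_martingale_general
    {Ω : Type*} {m : MeasurableSpace Ω} (μ : Measure Ω) [IsProbabilityMeasure μ]
    (n : ℕ) (u : ℝ)
    (δ : ℕ → Ω → ℝ) (s : ℕ → ℝ)
    (hmeas : ∀ k, StronglyMeasurable (δ k))
    (hindep : ProbabilityTheory.iIndepFun δ μ)
    (hmean : ∀ k, 2 ≤ k → k ≤ n → ∫ ω, δ k ω ∂μ = 0)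
    (hbdd : ∀ k, 2 ≤ k → k ≤ n → ∀ᵐ ω ∂μ, |δ k ω| ≤ u)
    -- the reversed sequence ε k = δ (n + 1 - k), so that ε 1 = δ n, ..., ε (n-1) = δ 2
    (ε : ℕ → Ω → ℝ) (hε : ∀ k, ε k = δ (n + 1 - k))
    -- Z k = ∑_{j = n-k+1}^{n} s j * δ j * ∏_{ℓ = j+1}^{n} (1 + δ ℓ)
    (Z : ℕ → Ω → ℝ)
    (hZ : ∀ k ω, Z k ω =
      ∑ j ∈ Finset.Icc (n - k + 1) n, s j * δ j ω * ∏ ℓ ∈ Finset.Icc (j + 1) n, (1 + δ ℓ ω)) :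
    (∀ k, 1 ≤ k → k ≤ n - 1 →
        StronglyMeasurable[(Filtration.natural ε (fun k => (hε k ▸ hmeas (n + 1 - k)))) k] (Z k)) ∧
      (∀ k, 1 ≤ k → k + 1 ≤ n - 1 →
        μ[Z (k + 1) | (Filtration.natural ε (fun k => (hε k ▸ hmeas (n + 1 - k)))) k]
          =ᵐ[μ] Z k) := by
  set F := Filtration.natural ε (fun k => (hε k ▸ hmeas (n + 1 - k)))
  have hZ_eq : ∀ k, Z k = tailSum s δ n (n - k + 1) := fun k =>
    funext fun ω => (hZ k ω).trans (tailSum_apply s δ n _ ω).symm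
  have hδ_adapted : ∀ k j, n - k + 1 ≤ j → j ≤ n → StronglyMeasurable[F k] (δ j) := by
    intro k j hj₁ hj₂
    have hεδ : ε (n + 1 - j) = δ j := by rw [hε, Nat.sub_sub_self (by omega)]
    exact hεδ ▸ (Filtration.stronglyAdapted_natural _ _).mono (F.mono (by omega))
  have hZ_meas : ∀ k, StronglyMeasurable[F k] (Z k) := fun k =>
    hZ_eq k ▸ stronglyMeasurable_tailSum fun j hj =>
      hδ_adapted k j (mem_Icc.1 hj).1 (mem_Icc.1 hj).2
  have hδ_memLp : ∀ j ∈ Icc 2 n, MemLp (δ j) ∞ μ := fun j hj =>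
    memLp_top_of_bound (hmeas j).aestronglyMeasurable u <| by
      simpa only [Real.norm_eq_abs] using hbdd j (mem_Icc.1 hj).1 (mem_Icc.1 hj).2
  have hZ_int : ∀ k ≤ n - 1, Integrable (Z k) μ := fun k hk =>
    hZ_eq k ▸ (memLp_top_tailSum fun j hj =>
      hδ_memLp j (by simp only [mem_Icc] at hj ⊢; omega)).integrable le_top
  refine ⟨fun k _ _ => hZ_meas k, fun k hk₁ hk₂ => ?_⟩
  have hZ_succ : Z (k + 1) = weight s δ n (n - k) * δ (n - k) + Z k := by
    rw [hZ_eq, hZ_eq, show n - (k + 1) + 1 = n - k by omega, tailSum_eq_add s δ n (Nat.sub_le n k)]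
  have hδ_indep : Indep (MeasurableSpace.comap (δ (n - k)) inferInstance) (F k) μ :=
    hindep.indep_comap_of_le_iSup_compl (fun i => (hmeas i).measurable) <|
      Filtration.natural_le_iSup_comap _ fun i hi =>
        ⟨n + 1 - i, by simp only [Set.mem_compl_iff, Set.mem_singleton_iff]; omega, hε i⟩
  have hδ_memLp' : ∀ j ∈ Icc (n - k) n, MemLp (δ j) ∞ μ := fun j hj =>
    hδ_memLp j (by simp only [mem_Icc] at hj ⊢; omega)
  rw [hZ_succ]
  exact condExp_mul_add_ae_eq_of_indep (F.le k) (hmeas _).measurable hδ_indep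
    ((hδ_memLp' _ (by simp)).integrable le_top) (hmean _ (by omega) (by omega))
    (stronglyMeasurable_weight fun ℓ hℓ =>
      hδ_adapted k ℓ (by simp only [mem_Icc] at hℓ; omega) (mem_Icc.1 hℓ).2)
    ((memLp_top_weight_mul (Nat.sub_le n k) hδ_memLp').integrable le_top)
    (hZ_meas k) (hZ_int k (by omega))

theorem reversed_error_process_is_martingale
    {Ω : Type*} {m : MeasurableSpace Ω} (μ : Measure Ω) [IsProbabilityMeasure μ]
    (n : ℕ) (hn : 2 ≤ n) (u : ℝ) (hu : 0 ≤ u)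
    (δ : ℕ → Ω → ℝ) (s : ℕ → ℝ)
    (hmeas : ∀ k, StronglyMeasurable (δ k))
    (hindep : ProbabilityTheory.iIndepFun δ μ)
    (hmean : ∀ k, 2 ≤ k → k ≤ n → ∫ ω, δ k ω ∂μ = 0)
    (hbdd : ∀ k, 2 ≤ k → k ≤ n → ∀ᵐ ω ∂μ, |δ k ω| ≤ u)
    -- the reversed sequence ε k = δ (n + 1 - k), so that ε 1 = δ n, ..., ε (n-1) = δ 2
    (ε : ℕ → Ω → ℝ) (hε : ∀ k, ε k = δ (n + 1 - k))
    -- Z k = ∑_{j = n-k+1}^{n} s j * δ j * ∏_{ℓ = j+1}^{n} (1 + δ ℓ)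
    (Z : ℕ → Ω → ℝ)
    (hZ : ∀ k ω, Z k ω =
      ∑ j ∈ Finset.Icc (n - k + 1) n, s j * δ j ω * ∏ ℓ ∈ Finset.Icc (j + 1) n, (1 + δ ℓ ω)) :
    (∀ k, 1 ≤ k → k ≤ n - 1 →
        StronglyMeasurable[(Filtration.natural ε (fun k => (hε k ▸ hmeas (n + 1 - k)))) k] (Z k)) ∧
      (∀ k, 1 ≤ k → k + 1 ≤ n - 1 →
        μ[Z (k + 1) | (Filtration.natural ε (fun k => (hε k ▸ hmeas (n + 1 - k)))) k]
          =ᵐ[μ] Z k) :=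
  reversed_error_process_is_martingale_general (m := m) μ n u δ s hmeas hindep hmean hbdd ε hε Z hZ
end
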